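/- arXiv:2008.03355 — 4 statements merged into one kernel-verified Lean document; each statement's English description precedes it below -/
import Mathlib

section
/- Let h : ℝ → ℝ be antitone (x ≤ y implies h(y) ≤ h(x)) and left continuous (for every c and every monotone increasing sequence x_n → c one has h(x_n) → h(c)). Let D₁ be any real number, define D_{n+1} = h(D_n) for n ≥ 1, and suppose the sequence (D_n) converges to a limit D. Then D is a fixed point of h, i.e., h(D) = D. -/
/-!
Write `D (n + 1) = h (D n)` with `D n → L`. If `D n < L` infinitely often, then along those
indices `D n → L` from the left, where the antitone, sequentially left continuous `h` is
continuous within `Iio L`; hence `h (D n) → h L`, while `h (D n) = D (n + 1) → L`.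
Otherwise `D n ≥ L` eventually. Whenever `D n < x` we get `h x ≤ h (D n) = D (n + 1)`, so
`h x ≤ L` for every `x > L`; thus `D m > L` forces `D (m + 1) = L`, and `D n = L` infinitely
often, which gives `h L = D (n + 1) → L`.
-/

open Filter Function Set Topology

section IterationLimit

variable {X : Type*} [TopologicalSpace X] {h : X → X} {D : ℕ → X} {L : X}

theorem ContinuousWithinAt.isFixedPt_of_frequently_mem [T2Space X] {s : Set X}
    (hcont : ContinuousWithinAt h s L) (hD : Tendsto D atTop (𝓝 L))
    (hrec : ∀ᶠ n in atTop, D (n + 1) = h (D n)) (hfreq : ∃ᶠ n in atTop, D n ∈ s) :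
    IsFixedPt h L := by
  set F := atTop ⊓ 𝓟 {n | D n ∈ s}
  have : NeBot F := frequently_iff_neBot.1 hfreq
  have hF : F ≤ atTop := inf_le_left
  have hDs : Tendsto D F (𝓝[s] L) :=
    tendsto_nhdsWithin_iff.2 ⟨hD.mono_left hF, eventually_inf_principal.2 (.of_forall fun _ => id)⟩
  have hshift : Tendsto (fun n => D (n + 1)) F (𝓝 L) :=
    ((tendsto_add_atTop_iff_nat 1).2 hD).mono_left hF
  exact tendsto_nhds_unique_of_eventuallyEq (hcont.tendsto.comp hDs) hshift
    ((hrec.filter_mono hF).mono fun _ hn => hn.symm)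

end IterationLimit

section Antitone

variable {α : Type*} [LinearOrder α] [TopologicalSpace α] [OrderTopology α]
  {h : α → α} {D : ℕ → α} {L : α}

theorem Antitone.le_of_tendsto_iterate_of_lt (hh : Antitone h) (hD : Tendsto D atTop (𝓝 L))
    (hrec : ∀ᶠ n in atTop, D (n + 1) = h (D n)) {x : α} (hx : L < x) : h x ≤ L := by
  refine _root_.ge_of_tendsto ((tendsto_add_atTop_iff_nat 1).2 hD) ?_
  filter_upwards [hD.eventually (eventually_lt_nhds hx), hrec] with n hn hrn
  rw [hrn]
  exact hh hn.le

theorem Antitone.frequently_eq_of_tendsto_iterate (hh : Antitone h) (hD : Tendsto D atTop (𝓝 L))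
    (hrec : ∀ᶠ n in atTop, D (n + 1) = h (D n)) (hge : ∀ᶠ n in atTop, L ≤ D n) :
    ∃ᶠ n in atTop, D n = L := by
  obtain ⟨M, hM⟩ := eventually_atTop.1 (hge.and hrec)
  refine frequently_atTop.2 fun N => ?_
  have hm := hM (max N M) (le_max_right N M)
  rcases hm.1.eq_or_lt with heq | hlt
  · exact ⟨max N M, le_max_left N M, heq.symm⟩
  · refine ⟨max N M + 1, by omega, le_antisymm ?_ (hM (max N M + 1) (by omega)).1⟩
    rw [hm.2]
    exact hh.le_of_tendsto_iterate_of_lt hD hrec hlt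

end Antitone

theorem Antitone.continuousWithinAt_Iio_of_tendsto_monotone {h : ℝ → ℝ} (hh : Antitone h) {c : ℝ}
    (hlc : ∀ x : ℕ → ℝ, Monotone x → Tendsto x atTop (𝓝 c) →
      Tendsto (fun n => h (x n)) atTop (𝓝 (h c))) :
    ContinuousWithinAt h (Iio c) c := by
  have hleft := hh.tendsto_nhdsLT c
  set x : ℕ → ℝ := fun n => c - 1 / (n + 1)
  have hx_mono : Monotone x := fun m n hmn => by
    simp only [x]
    gcongr
  have hx : Tendsto x atTop (𝓝 c) := by
    simpa [x] using (tendsto_const_nhds (x := c)).sub tendsto_one_div_add_atTop_nhds_zero_nat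
  have hx_lt : Tendsto x atTop (𝓝[<] c) :=
    tendsto_nhdsWithin_iff.2 ⟨hx, .of_forall fun n => sub_lt_self c Nat.one_div_pos_of_nat⟩
  have hlim : sInf (h '' Iio c) = h c := tendsto_nhds_unique (hleft.comp hx_lt) (hlc x hx_mono hx)
  rw [ContinuousWithinAt, ← hlim]
  exact hleft

theorem stmt_7_general (h : ℝ → ℝ) (hh : Antitone h)
    (hlc : ∀ (c : ℝ) (x : ℕ → ℝ), Monotone x →
      Filter.Tendsto x Filter.atTop (nhds c) →
      Filter.Tendsto (fun n => h (x n)) Filter.atTop (nhds (h c)))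
    (D : ℕ → ℝ)
    (hrec : ∀ n : ℕ, 1 ≤ n → D (n + 1) = h (D n))
    (L : ℝ) (hconv : Filter.Tendsto D Filter.atTop (nhds L)) :
    h L = L := by
  have hrec' : ∀ᶠ n in atTop, D (n + 1) = h (D n) := eventually_atTop.2 ⟨1, hrec⟩
  by_cases hlt : ∃ᶠ n in atTop, D n < L
  · exact (hh.continuousWithinAt_Iio_of_tendsto_monotone (hlc L)).isFixedPt_of_frequently_mem
      hconv hrec' hlt
  · have hge : ∀ᶠ n in atTop, L ≤ D n := by simpa using hlt
    exact continuousWithinAt_singleton.isFixedPt_of_frequently_mem hconv hrec'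
      (hh.frequently_eq_of_tendsto_iterate hconv hrec' hge)

/-- Let `h : ℝ → ℝ` be antitone and left continuous (in the sense that
`h (x n) → h c` whenever `x` is a monotone increasing sequence tending to `c`). Let `D₁`
be any real number, `D (n+1) = h (D n)` for `n ≥ 1`, and suppose the sequence `(D n)`
converges to a limit `L`. Then `L` is a fixed point of `h`: `h L = L`. -/
theorem stmt_7 (h : ℝ → ℝ) (hh : Antitone h)
    (hlc : ∀ (c : ℝ) (x : ℕ → ℝ), Monotone x →
      Filter.Tendsto x Filter.atTop (nhds c) →
      Filter.Tendsto (fun n => h (x n)) Filter.atTop (nhds (h c)))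
    (D₁ : ℝ) (D : ℕ → ℝ) (hD1 : D 1 = D₁)
    (hrec : ∀ n : ℕ, 1 ≤ n → D (n + 1) = h (D n))
    (L : ℝ) (hconv : Filter.Tendsto D Filter.atTop (nhds L)) :
    h L = L :=
  stmt_7_general h hh hlc D hrec L hconv
end

section
/- Let PTC : ℝ → ℝ be monotone increasing, left continuous, and satisfy 0 ≤ PTC(d) ≤ Q for all d, where Q > 0. Define the IRS iteration by (C₁, D₁) = (0, Q) and (C_{n+1}, D_{n+1}) = (PTC(D_n), Q − PTC(D_n)) for n ≥ 1. If (C_n, D_n) converges to a point (C, D), then C = PTC(D), D = Q − PTC(D) (so D + PTC(D) = Q), and D = max({d ∈ [0, Q] : d + PTC(d) ≤ Q}); that is, the limit of the IRS iteration, when it exists, is the largest deduction satisfying the no-double-dipping constraint. -/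
/-!
Write `g d = Q - PTC d`, so that `D (n + 1) = g (D n)` with `g` antitone. Then `g ∘ g` is
monotone and `D 3 ≤ Q = D 1`, so the odd-indexed terms decrease and the even-indexed ones,
their images under `g`, increase. Left continuity of `PTC` along this increasing subsequence
passes the recursion to the limit, giving `D = g D`; since `d ↦ d + PTC d` is strictly
increasing, any larger `d` violates `d + PTC d ≤ Q`.
-/

open Filter Topology

section AntitoneIteration

variable {α : Type*} [Preorder α] {g : α → α} {x : ℕ → α}

lemma antitone_even_of_antitone_step (hg : Antitone g) (hx : ∀ n, x (n + 1) = g (x n))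
    (h20 : x 2 ≤ x 0) : Antitone fun k => x (2 * k) := by
  have hx2 : ∀ n, x (n + 2) = (g ∘ g) (x n) := fun n => by
    rw [Function.comp_apply, ← hx, ← hx]
  refine antitone_nat_of_succ_le fun k => ?_
  induction k with
  | zero => exact h20
  | succ k ih =>
    calc x (2 * k + 2 + 2) = (g ∘ g) (x (2 * k + 2)) := hx2 _
      _ ≤ (g ∘ g) (x (2 * k)) := hg.comp hg ih
      _ = x (2 * k + 2) := (hx2 _).symm

lemma monotone_odd_of_antitone_step (hg : Antitone g) (hx : ∀ n, x (n + 1) = g (x n))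
    (h20 : x 2 ≤ x 0) : Monotone fun k => x (2 * k + 1) := by
  simpa only [hx, Function.comp_def] using hg.comp (antitone_even_of_antitone_step hg hx h20)

lemma apply_eq_of_tendsto_of_antitone_step [TopologicalSpace α] [T2Space α]
    (hg : Antitone g) (hx : ∀ n, x (n + 1) = g (x n)) (h20 : x 2 ≤ x 0) {L : α}
    (hL : Tendsto x atTop (𝓝 L))
    (hgL : ∀ u : ℕ → α, Monotone u → Tendsto u atTop (𝓝 L) →
      Tendsto (fun n => g (u n)) atTop (𝓝 (g L))) :
    g L = L := by
  have hodd : Tendsto (fun k => x (2 * k + 1)) atTop (𝓝 L) :=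
    hL.comp (StrictMono.tendsto_atTop fun a b h => by omega)
  have heven : Tendsto (fun k => x (2 * k + 1 + 1)) atTop (𝓝 L) :=
    hL.comp (StrictMono.tendsto_atTop fun a b h => by omega)
  simp only [hx (2 * _ + 1)] at heven
  exact tendsto_nhds_unique (hgL _ (monotone_odd_of_antitone_step hg hx h20) hodd) heven

end AntitoneIteration

lemma isGreatest_setOf_add_le_of_add_eq {f : ℝ → ℝ} (hf : Monotone f) {Q d₀ : ℝ}
    (hf₀ : 0 ≤ f d₀) (hfQ : f d₀ ≤ Q) (hd₀ : d₀ + f d₀ = Q) :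
    IsGreatest {d | d ∈ Set.Icc 0 Q ∧ d + f d ≤ Q} d₀ := by
  refine ⟨⟨⟨by linarith, by linarith⟩, hd₀.le⟩, fun d ⟨_, hd⟩ => ?_⟩
  by_contra! hlt
  linarith [hf hlt.le]

theorem stmt_8_general (Q : ℝ) (PTC : ℝ → ℝ)
    (hmono : Monotone PTC)
    (hlc : ∀ (c : ℝ) (x : ℕ → ℝ), Monotone x →
      Filter.Tendsto x Filter.atTop (nhds c) →
      Filter.Tendsto (fun n => PTC (x n)) Filter.atTop (nhds (PTC c)))
    (hbd : ∀ d : ℝ, 0 ≤ PTC d ∧ PTC d ≤ Q)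
    (C D : ℕ → ℝ) (hD1 : D 1 = Q)
    (hrec : ∀ n : ℕ, 1 ≤ n → C (n + 1) = PTC (D n) ∧ D (n + 1) = Q - PTC (D n))
    (Cl Dl : ℝ)
    (hconv : Filter.Tendsto (fun n => (C n, D n)) Filter.atTop (nhds (Cl, Dl))) :
    Cl = PTC Dl ∧ Dl = Q - PTC Dl ∧ Dl + PTC Dl = Q ∧
      IsGreatest {d | d ∈ Set.Icc (0 : ℝ) Q ∧ d + PTC d ≤ Q} Dl := by
  have hC : Tendsto (fun n => C (n + 1)) atTop (𝓝 Cl) :=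
    hconv.fst_nhds.comp (tendsto_add_atTop_nat 1)
  have hD : Tendsto (fun n => D (n + 1)) atTop (𝓝 Dl) :=
    hconv.snd_nhds.comp (tendsto_add_atTop_nat 1)
  have hstep : ∀ n, D (n + 1 + 1) = Q - PTC (D (n + 1)) := fun n => (hrec (n + 1) (by omega)).2
  have hDfix : Q - PTC Dl = Dl :=
    apply_eq_of_tendsto_of_antitone_step (g := fun d => Q - PTC d)
      (fun a b hab => sub_le_sub_left (hmono hab) Q) hstep
      (by simp only [hstep, hD1, sub_le_self_iff, (hbd _).1]) hD
      (fun u hu hut => tendsto_const_nhds.sub (hlc Dl u hu hut))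
  have hCD : ∀ n, Q - D (n + 1 + 1) = C (n + 1 + 1) := fun n => by
    rw [hstep, (hrec (n + 1) (by omega)).1]; ring
  have hCfix : Cl = Q - Dl := tendsto_nhds_unique (hC.comp (tendsto_add_atTop_nat 1))
    (((tendsto_const_nhds.sub hD).comp (tendsto_add_atTop_nat 1)).congr hCD)
  exact ⟨by linarith, hDfix.symm, by linarith,
    isGreatest_setOf_add_le_of_add_eq hmono (hbd Dl).1 (hbd Dl).2 (by linarith)⟩

/-- Let `PTC : ℝ → ℝ` be monotone increasing, left continuous (sequential
form with monotone increasing sequences) and satisfy `0 ≤ PTC d ≤ Q` for all `d`, with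
`Q > 0`. Define the IRS iteration by `(C₁, D₁) = (0, Q)` and
`(C (n+1), D (n+1)) = (PTC (D n), Q - PTC (D n))` for `n ≥ 1`. If `(C n, D n)` converges
to `(C, D)`, then `C = PTC D`, `D = Q - PTC D` (so `D + PTC D = Q`), and `D` is the
greatest element of `{d ∈ [0, Q] : d + PTC d ≤ Q}`. -/
theorem stmt_8 (Q : ℝ) (hQ : 0 < Q) (PTC : ℝ → ℝ)
    (hmono : Monotone PTC)
    (hlc : ∀ (c : ℝ) (x : ℕ → ℝ), Monotone x →
      Filter.Tendsto x Filter.atTop (nhds c) →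
      Filter.Tendsto (fun n => PTC (x n)) Filter.atTop (nhds (PTC c)))
    (hbd : ∀ d : ℝ, 0 ≤ PTC d ∧ PTC d ≤ Q)
    (C D : ℕ → ℝ) (hC1 : C 1 = 0) (hD1 : D 1 = Q)
    (hrec : ∀ n : ℕ, 1 ≤ n → C (n + 1) = PTC (D n) ∧ D (n + 1) = Q - PTC (D n))
    (Cl Dl : ℝ)
    (hconv : Filter.Tendsto (fun n => (C n, D n)) Filter.atTop (nhds (Cl, Dl))) :
    Cl = PTC Dl ∧ Dl = Q - PTC Dl ∧ Dl + PTC Dl = Q ∧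
      IsGreatest {d | d ∈ Set.Icc (0 : ℝ) Q ∧ d + PTC d ≤ Q} Dl :=
  stmt_8_general Q PTC hmono hlc hbd C D hD1 hrec Cl Dl hconv
end

section
/- Let h : ℝ → ℝ be antitone and left continuous, and suppose h has no fixed point (h(d) ≠ d for all d). Then for every initial value D₁, the orbit defined by D_{n+1} = h(D_n) does not converge. -/
/-! If the orbit converged to `L`, then `h (D n) = D (n + 1) → L`. The orbit cannot stay strictly
above `L`: once `D m < D N` for a fixed `N`, antitonicity gives `D (m + 1) ≥ D (N + 1) > L`, which
keeps the limit away from `L`. So infinitely many terms lie in `Iic L`, and left continuity of `h`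
at `L` along them forces `h L = L`. For antitone `h`, sequential left continuity along increasing
sequences already gives left continuity, because an antitone function has a left limit. -/

open Filter Set Topology Function

theorem Antitone.continuousWithinAt_Iic_of_tendsto_monotone_seq {α β : Type*} [LinearOrder α]
    [TopologicalSpace α] [OrderTopology α] [DenselyOrdered α] [NoMinOrder α]
    [FirstCountableTopology α] [ConditionallyCompleteLinearOrder β] [TopologicalSpace β]
    [OrderTopology β] {h : α → β} (hh : Antitone h) {c : α}
    (hseq : ∀ x : ℕ → α, Monotone x → Tendsto x atTop (𝓝 c) →
      Tendsto (fun n => h (x n)) atTop (𝓝 (h c))) :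
    ContinuousWithinAt h (Iic c) c := by
  obtain ⟨x, hx_mono, -, hx_lim⟩ := exists_seq_strictMono_tendsto_nhdsWithin c
  have hleft := hh.tendsto_nhdsLT c
  have hlimit : sInf (h '' Iio c) = h c :=
    tendsto_nhds_unique (hleft.comp hx_lim)
      (hseq x hx_mono.monotone (tendsto_nhds_of_tendsto_nhdsWithin hx_lim))
  rw [← continuousWithinAt_Iio_iff_Iic, ContinuousWithinAt, ← hlimit]
  exact hleft

theorem Antitone.frequently_le_of_tendsto_orbit {α : Type*} [LinearOrder α] [TopologicalSpace α]
    [OrderTopology α] {h : α → α} (hh : Antitone h) {u : ℕ → α} {L : α}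
    (hu : Tendsto u atTop (𝓝 L)) (hrec : ∀ᶠ n in atTop, u (n + 1) = h (u n)) :
    ∃ᶠ n in atTop, u n ≤ L := by
  intro habove
  simp only [not_le] at habove
  obtain ⟨N, hN⟩ := (habove.and hrec).exists_forall_of_atTop
  have hbound : ∀ᶠ m in atTop, u (N + 1) ≤ u (m + 1) := by
    filter_upwards [hu.eventually (eventually_lt_nhds (hN N le_rfl).1), hrec] with m hm hm_rec
    rw [hm_rec, (hN N le_rfl).2]
    exact hh hm.le
  have hlimit_ge : u (N + 1) ≤ L :=
    _root_.ge_of_tendsto ((tendsto_add_atTop_iff_nat 1).2 hu) hbound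
  exact hlimit_ge.not_gt (hN (N + 1) N.le_succ).1

theorem isFixedPt_of_frequently_le_of_tendsto_orbit {α : Type*} [TopologicalSpace α] [Preorder α]
    [T2Space α] {h : α → α} {u : ℕ → α} {L : α} (hc : ContinuousWithinAt h (Iic L) L)
    (hu : Tendsto u atTop (𝓝 L)) (hrec : ∀ᶠ n in atTop, u (n + 1) = h (u n))
    (hle : ∃ᶠ n in atTop, u n ≤ L) :
    IsFixedPt h L := by
  obtain ⟨φ, hφ, hφ_le⟩ := extraction_of_frequently_atTop hle
  have hsub : Tendsto (u ∘ φ) atTop (𝓝[≤] L) :=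
    tendsto_nhdsWithin_iff.2 ⟨hu.comp hφ.tendsto_atTop, Eventually.of_forall hφ_le⟩
  have hnext : Tendsto (fun n => u (φ n + 1)) atTop (𝓝 L) :=
    ((tendsto_add_atTop_iff_nat 1).2 hu).comp hφ.tendsto_atTop
  refine tendsto_nhds_unique (hc.tendsto.comp hsub) (hnext.congr' ?_)
  filter_upwards [hφ.tendsto_atTop.eventually hrec] with n hn
  exact hn

theorem Antitone.isFixedPt_of_tendsto_orbit {α : Type*} [LinearOrder α] [TopologicalSpace α]
    [OrderTopology α] {h : α → α} (hh : Antitone h) {u : ℕ → α} {L : α}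
    (hc : ContinuousWithinAt h (Iic L) L) (hu : Tendsto u atTop (𝓝 L))
    (hrec : ∀ᶠ n in atTop, u (n + 1) = h (u n)) :
    IsFixedPt h L :=
  isFixedPt_of_frequently_le_of_tendsto_orbit hc hu hrec (hh.frequently_le_of_tendsto_orbit hu hrec)

/-- Let `h : ℝ → ℝ` be antitone and left continuous (sequential form with
monotone increasing sequences), and suppose `h` has no fixed point. Then for every initial
value `D₁`, the orbit defined by `D (n+1) = h (D n)` does not converge. -/
theorem stmt_10 (h : ℝ → ℝ) (hh : Antitone h)
    (hlc : ∀ (c : ℝ) (x : ℕ → ℝ), Monotone x →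
      Filter.Tendsto x Filter.atTop (nhds c) →
      Filter.Tendsto (fun n => h (x n)) Filter.atTop (nhds (h c)))
    (hfix : ∀ d : ℝ, h d ≠ d) :
    ∀ (D₁ : ℝ) (D : ℕ → ℝ), D 1 = D₁ →
      (∀ n : ℕ, 1 ≤ n → D (n + 1) = h (D n)) →
      ¬ ∃ L : ℝ, Filter.Tendsto D Filter.atTop (nhds L) := by
  rintro - D - hrec ⟨L, hL⟩
  exact hfix L <| hh.isFixedPt_of_tendsto_orbit
    (hh.continuousWithinAt_Iic_of_tendsto_monotone_seq (hlc L)) hL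
    (eventually_atTop.2 ⟨1, hrec⟩)
end

section
/- Let Q > 0 and 0 < APTC ≤ Q be real numbers, let PTC : ℝ → ℝ be monotone increasing with 0 ≤ PTC(d) ≤ Q for all d, and let R > 0. For d with PTC(d) < APTC define the total benefit B(d) = APTC − min(APTC − PTC(d), R). Then: (i) PTC(d) ≤ B(d) < APTC; (ii) if d ≤ Q − APTC then d + B(d) < Q, so the no-double-dipping constraint is automatically satisfied with B in place of PTC; and (iii) if d + PTC(d) > Q then d + B(d) > Q. In particular, the deduction D = max({d ∈ [0, Q − APTC] : d + PTC(d) ≤ Q}), when it exists, remains the largest value in [0, Q − APTC] satisfying d + B(d) ≤ Q whenever APTC > PTC(D). -/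
/-! Capping the repayment at `R` turns the benefit into `B d = max (PTC d) (APTC - R)`:
it never falls below `PTC d`, and stays strictly below `APTC` because `R > 0`. Hence
`d + B d` is strictly below `Q` on `[0, Q - APTC]`, while it only grows where `d + PTC d`
already exceeds `Q`, so the feasible set for `B` is contained in that for `PTC` and still
contains `D`. -/

theorem sub_min_sub_eq_max {α : Type*} [AddCommGroup α] [LinearOrder α] [IsOrderedAddMonoid α]
    (a p r : α) : a - min (a - p) r = max p (a - r) := by
  rw [sub_inf, sub_sub_cancel]

theorem stmt_11_general (Q APTC R : ℝ)
    (hR : 0 < R) (PTC B : ℝ → ℝ)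
    (hB : ∀ d : ℝ, B d = APTC - min (APTC - PTC d) R) :
    (∀ d : ℝ, PTC d < APTC → PTC d ≤ B d ∧ B d < APTC) ∧
    (∀ d : ℝ, PTC d < APTC → d ≤ Q - APTC → d + B d < Q) ∧
    (∀ d : ℝ, PTC d < APTC → Q < d + PTC d → Q < d + B d) ∧
    (∀ D : ℝ, IsGreatest {d | d ∈ Set.Icc (0 : ℝ) (Q - APTC) ∧ d + PTC d ≤ Q} D →
      PTC D < APTC →
      IsGreatest {d | d ∈ Set.Icc (0 : ℝ) (Q - APTC) ∧ d + B d ≤ Q} D) := by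
  have hB_max d : B d = max (PTC d) (APTC - R) := by rw [hB, sub_min_sub_eq_max]
  have PTC_le_B d : PTC d ≤ B d := hB_max d ▸ le_max_left _ _
  have B_lt d (hd : PTC d < APTC) : B d < APTC := hB_max d ▸ max_lt hd (sub_lt_self _ hR)
  refine ⟨fun d hd => ⟨PTC_le_B d, B_lt d hd⟩,
    fun d hd hdQ => by linarith [B_lt d hd],
    fun d _ hdQ => by linarith [PTC_le_B d], ?_⟩
  rintro D ⟨⟨hD_mem, -⟩, hD_max⟩ hD
  have feasible_subset : {d | d ∈ Set.Icc (0 : ℝ) (Q - APTC) ∧ d + B d ≤ Q} ⊆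
      {d | d ∈ Set.Icc (0 : ℝ) (Q - APTC) ∧ d + PTC d ≤ Q} :=
    fun d ⟨hd_mem, hd⟩ => ⟨hd_mem, by linarith [PTC_le_B d]⟩
  exact ⟨⟨hD_mem, by linarith [B_lt D hD, hD_mem.2]⟩, upperBounds_mono_set feasible_subset hD_max⟩

/-- Let `Q > 0`, `0 < APTC ≤ Q`, `PTC : ℝ → ℝ` monotone increasing with
`0 ≤ PTC d ≤ Q` for all `d`, and `R > 0`. With the total benefit
`B d = APTC - min (APTC - PTC d) R`, for every `d` with `PTC d < APTC`:
(i) `PTC d ≤ B d < APTC`; (ii) if `d ≤ Q - APTC` then `d + B d < Q`; and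
(iii) if `d + PTC d > Q` then `d + B d > Q`. In particular, the deduction
`D = max {d ∈ [0, Q - APTC] : d + PTC d ≤ Q}`, when it exists, remains the largest value
in `[0, Q - APTC]` satisfying `d + B d ≤ Q` whenever `APTC > PTC D`. -/
theorem stmt_11 (Q APTC R : ℝ) (hQ : 0 < Q) (hAPTC0 : 0 < APTC) (hAPTCQ : APTC ≤ Q)
    (hR : 0 < R) (PTC B : ℝ → ℝ)
    (hmono : Monotone PTC) (hbd : ∀ d : ℝ, 0 ≤ PTC d ∧ PTC d ≤ Q)
    (hB : ∀ d : ℝ, B d = APTC - min (APTC - PTC d) R) :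
    (∀ d : ℝ, PTC d < APTC → PTC d ≤ B d ∧ B d < APTC) ∧
    (∀ d : ℝ, PTC d < APTC → d ≤ Q - APTC → d + B d < Q) ∧
    (∀ d : ℝ, PTC d < APTC → Q < d + PTC d → Q < d + B d) ∧
    (∀ D : ℝ, IsGreatest {d | d ∈ Set.Icc (0 : ℝ) (Q - APTC) ∧ d + PTC d ≤ Q} D →
      PTC D < APTC →
      IsGreatest {d | d ∈ Set.Icc (0 : ℝ) (Q - APTC) ∧ d + B d ≤ Q} D) :=
  stmt_11_general Q APTC R hR PTC B hB
end
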